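/- Let p = 1^i 0^j 1^k for some i, k ≥ 0 and j ≥ 1 (the concatenation of i ones, j zeros, and k ones). For any n ≥ i + j + k, the maximum number of occurrences of p in a binary word of length n equals the maximum of binomial(a, i) · binomial(b, j) · binomial(c, k) over all nonnegative integers a, b, c with a + b + c = n; that is, M_{n,p} = max{binomial(a,i)·binomial(b,j)·binomial(c,k) : a + b + c = n}. -/

import Mathlib

/-- `occ p w` is the number of occurrences of `p` as a subsequence of `w`,
i.e. the number of choices of indices `i₁ < ⋯ < i_l` in `w` matching `p`. -/
def occ (p w : List Bool) : ℕ := w.sublists.count p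

/-- `B n p k` is the number of binary words of length `n` with exactly `k` occurrences of `p`. -/
noncomputable def B (n : ℕ) (p : List Bool) (k : ℕ) : ℕ :=
  Nat.card {w : List Bool // w.length = n ∧ occ p w = k}

/-- The list of runs (maximal blocks of consecutive equal letters) of a binary word. -/
def runs (p : List Bool) : List (List Bool) := p.splitBy (· == ·)

/-- The number of runs of a binary word. -/
def numRuns (p : List Bool) : ℕ := (runs p).length

/-- The number of runs of size `i` of a binary word. -/
def numRunsOfSize (p : List Bool) (i : ℕ) : ℕ := ((runs p).map List.length).count i

/-- `maxOcc n p` is the maximum number of occurrences of `p` among binary words of length `n`. -/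
noncomputable def maxOcc (n : ℕ) (p : List Bool) : ℕ :=
  sSup {k | ∃ w : List Bool, w.length = n ∧ occ p w = k}

/-- `p` has an internal zero at `n` if the sequence `(B n p k)_{k ≥ 0}` has an internal zero. -/
def HasInternalZeroAt (p : List Bool) (n : ℕ) : Prop :=
  ∃ k₁ k₂ k₃ : ℕ, k₁ < k₂ ∧ k₂ < k₃ ∧ B n p k₁ ≠ 0 ∧ B n p k₂ = 0 ∧ B n p k₃ ≠ 0

/-- The binary word `1^a 0^b 1^c`. -/
def oneZeroOne (a b c : ℕ) : List Bool :=
  List.replicate a true ++ List.replicate b false ++ List.replicate c true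

/-!
A word `1^a 0^b 1^c` contains `1^i 0^j 1^k` at least `C(a,i) C(b,j) C(c,k)` times, by choosing
each block of the pattern inside the corresponding block of the word.

Conversely, let `w` have `T` ones and `F` zeros. An occurrence of `1^i 0^j 1^k` uses `j` of the
zeros (`C(F,j)` choices); if `a` ones of `w` precede the first of them and `c` ones follow
the last, then `a + c ≤ T`, and the ones can be chosen in
`C(a,i) C(c,k) ≤ max_{a+c=T} C(a,i) C(c,k)` ways. The upper bound is proved by induction
along `w`, where the ones already read, `t` of them, are remembered through the weight `C(t,i)`
of the leading block `1^i`.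
-/

open List Finset

lemma occ_eq_count_sublists' (p w : List Bool) : occ p w = w.sublists'.count p :=
  (sublists_perm_sublists' w).count_eq p

lemma occ_le_of_sublist (p : List Bool) {w w' : List Bool} (h : w <+ w') :
    occ p w ≤ occ p w' := by
  simpa only [occ_eq_count_sublists'] using h.sublists'.count_le p

lemma occ_eq_zero_of_not_sublist {p w : List Bool} (h : ¬p <+ w) : occ p w = 0 :=
  count_eq_zero.2 (mt mem_sublists.1 h)

lemma occ_nil_left (w : List Bool) : occ [] w = 1 := by
  induction w with
  | nil => rfl
  | cons a w ih =>
    rw [occ_eq_count_sublists'] at *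
    rw [sublists'_cons, count_append, ih, count_eq_zero.2 (by simp)]

lemma occ_cons_nil (x : Bool) (p : List Bool) : occ (x :: p) [] = 0 := rfl

lemma occ_cons_cons (x : Bool) (p : List Bool) (a : Bool) (w : List Bool) :
    occ (x :: p) (a :: w) = occ (x :: p) w + if x = a then occ p w else 0 := by
  rw [occ_eq_count_sublists', occ_eq_count_sublists', occ_eq_count_sublists',
    sublists'_cons, count_append]
  congr 1
  split_ifs with h
  · subst h
    exact count_map_of_injective _ _ cons_injective _
  · exact count_eq_zero.2 (by simp [Ne.symm h])

lemma occ_replicate (x : Bool) (m : ℕ) (w : List Bool) :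
    occ (replicate m x) w = (w.count x).choose m := by
  induction w generalizing m with
  | nil => cases m <;> rfl
  | cons a w ih =>
    cases m with
    | zero => simp [occ_nil_left]
    | succ m =>
      rw [replicate_succ, occ_cons_cons, ← replicate_succ, ih, ih, count_cons]
      by_cases h : x = a
      · simp [h, Nat.choose_succ_succ, Nat.add_comm]
      · simp [h, Ne.symm h]

lemma occ_mul_occ_le_occ_append (q₁ q₂ w₁ w₂ : List Bool) :
    occ q₁ w₁ * occ q₂ w₂ ≤ occ (q₁ ++ q₂) (w₁ ++ w₂) := by
  induction w₁ generalizing q₁ with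
  | nil =>
    cases q₁ with
    | nil => simp [occ_nil_left]
    | cons a q₁ => simp [occ_cons_nil]
  | cons c v ih =>
    cases q₁ with
    | nil =>
      simpa [occ_nil_left] using occ_le_of_sublist q₂ ((sublist_append_right v w₂).cons c)
    | cons a q₁ =>
      rw [cons_append, cons_append, occ_cons_cons, occ_cons_cons]
      split_ifs
      · rw [add_mul]; exact Nat.add_le_add (ih (a :: q₁)) (ih q₁)
      · simpa using ih (a :: q₁)

lemma choose_mul_choose_le_occ_oneZeroOne (i j k a b c : ℕ) :
    a.choose i * b.choose j * c.choose k ≤ occ (oneZeroOne i j k) (oneZeroOne a b c) := by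
  calc a.choose i * b.choose j * c.choose k
      = occ (replicate i true) (replicate a true) * occ (replicate j false) (replicate b false) *
          occ (replicate k true) (replicate c true) := by
        simp only [occ_replicate, count_replicate_self]
    _ ≤ _ := (Nat.mul_le_mul_right _ (occ_mul_occ_le_occ_append _ _ _ _)).trans
        (occ_mul_occ_le_occ_append _ _ _ _)

/-- Occurrences of `x^i y q` in `x^t y v` that use the displayed `y` are those that match it
with the first `y` of the pattern; their `x^i` must then lie in `x^t`. -/
lemma occ_replicate_append_cons {x y : Bool} (hxy : x ≠ y) (i t : ℕ) (q v : List Bool) :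
    occ (replicate i x ++ y :: q) (replicate t x ++ y :: v) =
      occ (replicate i x ++ y :: q) (replicate t x ++ v) + t.choose i * occ q v := by
  induction t generalizing i with
  | zero => cases i <;> simp [replicate_succ, occ_cons_cons, hxy]
  | succ t ih =>
    cases i with
    | zero => simpa [replicate_succ, occ_cons_cons, Ne.symm hxy] using ih 0
    | succ i =>
      have h := ih (i + 1)
      simp only [replicate_succ, cons_append] at h ⊢
      rw [occ_cons_cons, occ_cons_cons, if_pos rfl, if_pos rfl, h, ih i, Nat.choose_succ_succ]
      ring

def maxChooseMul (i k s : ℕ) : ℕ :=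
  (antidiagonal s).sup fun ac => ac.1.choose i * ac.2.choose k

lemma choose_mul_choose_le_maxChooseMul (i k a c : ℕ) :
    a.choose i * c.choose k ≤ maxChooseMul i k (a + c) :=
  le_sup (f := fun ac : ℕ × ℕ => ac.1.choose i * ac.2.choose k) (b := (a, c))
    (mem_antidiagonal.2 rfl)

lemma exists_maxChooseMul_eq (i k s : ℕ) :
    ∃ a c, a + c = s ∧ maxChooseMul i k s = a.choose i * c.choose k := by
  obtain ⟨⟨a, c⟩, hac, h⟩ := exists_mem_eq_sup (antidiagonal s) ⟨(0, s), by simp⟩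
    fun ac => ac.1.choose i * ac.2.choose k
  exact ⟨a, c, mem_antidiagonal.1 hac, h⟩

lemma choose_mul_occ_replicate_append_le {x y : Bool} (hxy : x ≠ y) (i j k t : ℕ)
    (v : List Bool) :
    t.choose i * occ (replicate j y ++ replicate k x) v ≤
      maxChooseMul i k (t + v.count x) * (v.count y).choose j := by
  induction j generalizing t v with
  | zero => simpa [occ_replicate] using choose_mul_choose_le_maxChooseMul i k t (v.count x)
  | succ j ihj =>
    induction v generalizing t with
    | nil => simp [replicate_succ, occ_cons_nil]
    | cons a v ihv =>
      rw [replicate_succ, cons_append, occ_cons_cons, ← cons_append, ← replicate_succ]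
      obtain rfl | rfl : x = a ∨ y = a := by cases a <;> cases x <;> cases y <;> simp_all
      · rw [if_neg (Ne.symm hxy), add_zero, count_cons_self, count_cons_of_ne hxy,
          ← add_assoc, ← add_right_comm]
        exact (Nat.mul_le_mul_right _ (Nat.choose_le_choose i t.le_succ)).trans (ihv (t + 1))
      · rw [if_pos rfl, count_cons_self, count_cons_of_ne (Ne.symm hxy), Nat.choose_succ_succ',
          mul_add, mul_add]
        exact (Nat.add_le_add (ihv t) (ihj t v)).trans_eq (add_comm _ _)

lemma occ_replicate_append_cons_le {x y : Bool} (hxy : x ≠ y) (i j k t : ℕ) (v : List Bool) :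
    occ (replicate i x ++ y :: (replicate j y ++ replicate k x)) (replicate t x ++ v) ≤
      maxChooseMul i k (t + v.count x) * (v.count y).choose (j + 1) := by
  induction v generalizing t with
  | nil =>
    rw [append_nil, occ_eq_zero_of_not_sublist]
    · exact Nat.zero_le _
    · exact fun h => hxy (eq_of_mem_replicate (h.subset (by simp))).symm
  | cons a v ih =>
    obtain rfl | rfl : x = a ∨ y = a := by cases a <;> cases x <;> cases y <;> simp_all
    · rw [show replicate t x ++ x :: v = replicate (t + 1) x ++ v by simp [replicate_succ'],
        count_cons_self, count_cons_of_ne hxy, ← add_assoc, add_right_comm]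
      exact ih (t + 1)
    · rw [occ_replicate_append_cons hxy, count_cons_self, count_cons_of_ne (Ne.symm hxy),
        Nat.choose_succ_succ', mul_add]
      exact (Nat.add_le_add (ih t) (choose_mul_occ_replicate_append_le hxy i j k t v)).trans_eq
        (add_comm _ _)

lemma occ_oneZeroOne_le (i j k : ℕ) (w : List Bool) :
    occ (oneZeroOne i (j + 1) k) w ≤
      maxChooseMul i k (w.count true) * (w.count false).choose (j + 1) := by
  simpa [oneZeroOne, replicate_succ, append_assoc] using
    occ_replicate_append_cons_le (by decide : true ≠ false) i j k 0 w

theorem maxOcc_oneZeroOne_general (i j k : ℕ) (hj : 1 ≤ j) (n : ℕ) :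
    maxOcc n (oneZeroOne i j k)
      = sSup {m | ∃ a b c : ℕ, a + b + c = n ∧
          m = a.choose i * b.choose j * c.choose k} := by
  obtain ⟨j, rfl⟩ := Nat.exists_eq_add_of_le' hj
  set R := {m | ∃ a b c : ℕ, a + b + c = n ∧ m = a.choose i * b.choose (j + 1) * c.choose k}
  have hR : BddAbove R := ⟨n.choose i * n.choose (j + 1) * n.choose k, by
    rintro _ ⟨a, b, c, h, rfl⟩
    gcongr <;> omega⟩
  have hle : ∀ m ∈ {m | ∃ w : List Bool, w.length = n ∧ occ (oneZeroOne i (j + 1) k) w = m},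
      m ≤ sSup R := by
    rintro _ ⟨w, rfl, rfl⟩
    obtain ⟨a, c, hac, hM⟩ := exists_maxChooseMul_eq i k (w.count true)
    refine (occ_oneZeroOne_le i j k w).trans (le_csSup hR ⟨a, w.count false, c, ?_, ?_⟩)
    · rw [← count_true_add_count_false]
      omega
    · rw [hM]
      ring
  refine le_antisymm (csSup_le ⟨_, replicate n true, length_replicate, rfl⟩ hle) ?_
  refine csSup_le ⟨_, n, 0, 0, by simp, rfl⟩ ?_
  rintro _ ⟨a, b, c, h, rfl⟩
  exact le_csSup_of_le ⟨_, hle⟩ ⟨oneZeroOne a b c, by simp [oneZeroOne]; omega, rfl⟩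
    (choose_mul_choose_le_occ_oneZeroOne i (j + 1) k a b c)

theorem maxOcc_oneZeroOne (i j k : ℕ) (hj : 1 ≤ j) (n : ℕ) (hn : i + j + k ≤ n) :
    maxOcc n (oneZeroOne i j k)
      = sSup {m | ∃ a b c : ℕ, a + b + c = n ∧
          m = a.choose i * b.choose j * c.choose k} :=
  maxOcc_oneZeroOne_general i j k hj n
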